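/- Grid stability: with grids of mesh ε, if d_H(Gr(h), Gr(h')) ≤ ε in the L∞ metric, then the gridded correspondences satisfy F^h_ε ⊆ (F^{h'}_ε)_ε and F^{h'}_ε ⊆ (F^h_ε)_ε, i.e. d_H(F^h_ε, F^{h'}_ε) ≤ ε, and the resulting ℝ-persistence modules M^h, M^{h'} of the grid filtrations satisfy d_I(M^h, M^{h'}) ≤ ε. -/

import Mathlib

/-!
If `d_H(Gr h, Gr h') ≤ ε` and the graphs are finite, every sample `(s, h s)` has a sample
`(s', h' s')` at `L∞`-distance at most `ε`. Coordinatewise, `s'` then lies in the grid cell of `s`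
or in an adjacent one, and the face shared by adjacent cells is within `ε` of every point of the
cell; so each point of a product of cells meeting `Gr h` is within `ε` of a product of cells
meeting `Gr h'`, i.e. `d_H(F^h_ε, F^{h'}_ε) ≤ ε`. Hence `(F^h_ε)_{iε} ⊆ (F^{h'}_ε)_{(i+1)ε}`,
and by naturality of `p` and `q` the inclusions preserve `ker p ⊔ ker q`, so they induce maps of
the `I[1,3]`-multiplicity spaces forming an `ε`-interleaving.
-/

open CategoryTheory EMetric ENNReal

noncomputable section

/-- Singular homology in degree `k` with coefficients in the field `K`. -/
def SingH (K : Type) [Field K] (k : ℕ) : TopCat.{0} ⥤ ModuleCat.{0} K :=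
  TopCat.toSSet ⋙ ((SimplicialObject.whiskering _ _).obj (ModuleCat.free K)) ⋙
    AlgebraicTopology.alternatingFaceMapComplex _ ⋙
    HomologicalComplex.homologyFunctor _ _ k

/-- An `ℝ`-persistence module (the data of modules and transition maps). -/
structure PersData (K : Type) [Field K] where
  Mod : ℝ → ModuleCat.{0} K
  tr : ∀ {r s : ℝ}, r ≤ s → (Mod r ⟶ Mod s)

/-- A `δ`-interleaving between `ℝ`-persistence modules: morphisms `f : M → N(δ)` and
`g : N → M(δ)` (natural with respect to the transition maps) whose composites are the
`2δ`-transition morphisms. -/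
def Interleaved (K : Type) [Field K] (M N : PersData K) (δ : ℝ) : Prop :=
  ∃ hδ : 0 ≤ δ, ∃ (f : ∀ r : ℝ, M.Mod r ⟶ N.Mod (r + δ)) (g : ∀ r : ℝ, N.Mod r ⟶ M.Mod (r + δ)),
    (∀ r s (h : r ≤ s), f r ≫ N.tr (by linarith : r + δ ≤ s + δ) = M.tr h ≫ f s) ∧
    (∀ r s (h : r ≤ s), g r ≫ M.tr (by linarith : r + δ ≤ s + δ) = N.tr h ≫ g s) ∧
    (∀ r : ℝ, f r ≫ g (r + δ) = M.tr (by linarith [hδ] : r ≤ r + δ + δ)) ∧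
    (∀ r : ℝ, g r ≫ f (r + δ) = N.tr (by linarith [hδ] : r ≤ r + δ + δ))

/-- The interleaving distance between `ℝ`-persistence modules. -/
def dI (K : Type) [Field K] (M N : PersData K) : ℝ≥0∞ :=
  sInf {e | ∃ δ : ℝ, e = ENNReal.ofReal δ ∧ Interleaved K M N δ}

/-- A filtration of correspondences: for each `r ∈ ℝ` a correspondence `Gf r ⊆ α × β` with
the domain-side spaces `Xf r`, codomain-side spaces `Yf r`, all increasing in `r`, such
that the projections restrict to maps `Xf r ← Gf r → Yf r`. -/
structure FiltCorr (α β : Type) [TopologicalSpace α] [TopologicalSpace β] where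
  Xf : ℝ → Set α
  Gf : ℝ → Set (α × β)
  Yf : ℝ → Set β
  monoX : ∀ {r s : ℝ}, r ≤ s → Xf r ⊆ Xf s
  monoG : ∀ {r s : ℝ}, r ≤ s → Gf r ⊆ Gf s
  monoY : ∀ {r s : ℝ}, r ≤ s → Yf r ⊆ Yf s
  projX : ∀ r, ∀ z ∈ Gf r, z.1 ∈ Xf r
  projY : ∀ r, ∀ z ∈ Gf r, z.2 ∈ Yf r

variable {α β : Type} [TopologicalSpace α] [TopologicalSpace β]

/-- The first projection `Gf r → Xf r`, as a map of spaces. -/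
def FiltCorr.pMor (F : FiltCorr α β) (r : ℝ) : TopCat.of (F.Gf r) ⟶ TopCat.of (F.Xf r) :=
  TopCat.ofHom ⟨fun z => ⟨z.1.1, F.projX r _ z.2⟩,
    Continuous.subtype_mk (continuous_fst.comp continuous_subtype_val) _⟩

/-- The second projection `Gf r → Yf r`, as a map of spaces. -/
def FiltCorr.qMor (F : FiltCorr α β) (r : ℝ) : TopCat.of (F.Gf r) ⟶ TopCat.of (F.Yf r) :=
  TopCat.ofHom ⟨fun z => ⟨z.1.2, F.projY r _ z.2⟩,
    Continuous.subtype_mk (continuous_snd.comp continuous_subtype_val) _⟩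

/-- The inclusion `Gf r ⊆ Gf s`, as a map of spaces. -/
def FiltCorr.iG (F : FiltCorr α β) {r s : ℝ} (h : r ≤ s) :
    TopCat.of (F.Gf r) ⟶ TopCat.of (F.Gf s) :=
  TopCat.ofHom ⟨Set.inclusion (F.monoG h), continuous_inclusion _⟩

/-- The inclusion `Xf r ⊆ Xf s`, as a map of spaces. -/
def FiltCorr.iX (F : FiltCorr α β) {r s : ℝ} (h : r ≤ s) :
    TopCat.of (F.Xf r) ⟶ TopCat.of (F.Xf s) :=
  TopCat.ofHom ⟨Set.inclusion (F.monoX h), continuous_inclusion _⟩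

/-- The inclusion `Yf r ⊆ Yf s`, as a map of spaces. -/
def FiltCorr.iY (F : FiltCorr α β) {r s : ℝ} (h : r ≤ s) :
    TopCat.of (F.Yf r) ⟶ TopCat.of (F.Yf s) :=
  TopCat.ofHom ⟨Set.inclusion (F.monoY h), continuous_inclusion _⟩

variable (K : Type) [Field K] (k : ℕ)

/-- The submodule `ker p₋ ⊔ ker q₋` of `H(Gf r)`: under an interval decomposition of the
`A₃(bf)` representation `H(Xf r) ← H(Gf r) → H(Yf r)` it is exactly the sum of all
summands other than `I[1,3]`, so the quotient by it is the multiplicity space of the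
interval `I[1,3]`. -/
def FiltCorr.ker13 (F : FiltCorr α β) (r : ℝ) :
    Submodule K ((SingH K k).obj (TopCat.of (F.Gf r))) :=
  LinearMap.ker ((SingH K k).map (F.pMor r)).hom ⊔ LinearMap.ker ((SingH K k).map (F.qMor r)).hom

lemma FiltCorr.p_comm (F : FiltCorr α β) {r s : ℝ} (h : r ≤ s) :
    F.iG h ≫ F.pMor s = F.pMor r ≫ F.iX h := by ext x; rfl

lemma FiltCorr.q_comm (F : FiltCorr α β) {r s : ℝ} (h : r ≤ s) :
    F.iG h ≫ F.qMor s = F.qMor r ≫ F.iY h := by ext x; rfl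

lemma FiltCorr.ker13_le (F : FiltCorr α β) {r s : ℝ} (h : r ≤ s) :
    F.ker13 K k r ≤ (F.ker13 K k s).comap ((SingH K k).map (F.iG h)).hom := by
  refine sup_le ?_ ?_
  · intro u hu
    refine Submodule.mem_comap.2 (Submodule.mem_sup_left (LinearMap.mem_ker.2 ?_))
    have e : (SingH K k).map (F.iG h) ≫ (SingH K k).map (F.pMor s) =
        (SingH K k).map (F.pMor r) ≫ (SingH K k).map (F.iX h) := by
      rw [← Functor.map_comp, ← Functor.map_comp, FiltCorr.p_comm]
    have e' : ((SingH K k).map (F.pMor s)).hom (((SingH K k).map (F.iG h)).hom u) =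
        ((SingH K k).map (F.iX h)).hom (((SingH K k).map (F.pMor r)).hom u) := by
      change ((SingH K k).map (F.iG h) ≫ (SingH K k).map (F.pMor s)).hom u = _
      rw [e]; rfl
    rw [e', LinearMap.mem_ker.1 hu, map_zero]
  · intro u hu
    refine Submodule.mem_comap.2 (Submodule.mem_sup_right (LinearMap.mem_ker.2 ?_))
    have e : (SingH K k).map (F.iG h) ≫ (SingH K k).map (F.qMor s) =
        (SingH K k).map (F.qMor r) ≫ (SingH K k).map (F.iY h) := by
      rw [← Functor.map_comp, ← Functor.map_comp, FiltCorr.q_comm]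
    have e' : ((SingH K k).map (F.qMor s)).hom (((SingH K k).map (F.iG h)).hom u) =
        ((SingH K k).map (F.iY h)).hom (((SingH K k).map (F.qMor r)).hom u) := by
      change ((SingH K k).map (F.iG h) ≫ (SingH K k).map (F.qMor s)).hom u = _
      rw [e]; rfl
    rw [e', LinearMap.mem_ker.1 hu, map_zero]

/-- The `ℝ`-persistence module of the filtration of correspondences `F`: at each radius the
`I[1,3]`-multiplicity space `H(Gf r) ⧸ (ker p₋ ⊔ ker q₋)` of the `A₃(bf)` representation
`H(Xf r) ← H(Gf r) → H(Yf r)`, with transition maps induced by the inclusions. -/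
def FiltCorr.pers (F : FiltCorr α β) : PersData K where
  Mod r := ModuleCat.of K ((SingH K k).obj (TopCat.of (F.Gf r)) ⧸ F.ker13 K k r)
  tr {r s} h := ModuleCat.ofHom
    (Submodule.mapQ (F.ker13 K k r) (F.ker13 K k s) ((SingH K k).map (F.iG h)).hom
      (F.ker13_le K k h))

end

noncomputable section

/-- `ℝⁿ` with the `L∞` (sup) metric. -/
abbrev Linf (n : ℕ) := Fin n → ℝ

/-- The closed `r`-offset of a set. -/
def off {γ : Type} [PseudoEMetricSpace γ] (A : Set γ) (r : ℝ≥0∞) : Set γ :=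
  {x | infEdist x A ≤ r}

/-- The graph of a sampled map `h : S → ℝⁿ`. -/
def gr {n : ℕ} {S : Set (Linf n)} (h : S → Linf n) : Set (Linf n × Linf n) :=
  Set.range fun s : S => ((s : Linf n), h s)

/-- The closed `ε`-cube of the grid with corner `ε • a`, `a ∈ ℤⁿ`. -/
def cube {n : ℕ} (ε : ℝ) (a : Fin n → ℤ) : Set (Linf n) :=
  {x | ∀ i, (a i : ℝ) * ε ≤ x i ∧ x i ≤ ((a i : ℝ) + 1) * ε}

/-- The gridded correspondence `F^h_ε`: the union of all products `X' × Y'` of `ε`-cubes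
of the grids meeting the graph of the sampled map `h`. -/
def gridCorr {n : ℕ} (ε : ℝ) {S : Set (Linf n)} (h : S → Linf n) :
    Set (Linf n × Linf n) :=
  {z | ∃ aX aY : Fin n → ℤ, z.1 ∈ cube ε aX ∧ z.2 ∈ cube ε aY ∧
    ∃ s : S, (s : Linf n) ∈ cube ε aX ∧ h s ∈ cube ε aY}

/-- The grid filtration, extended to a right-continuous step filtration over `ℝ`:
at radius `r` it is the `iε`-offset `F_{iε} = (F^h_ε)_{iε}` for the largest `i ≥ 1` with
`iε ≤ r` (and empty for `r < ε`). -/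
def stepSet {n : ℕ} (ε : ℝ) (A : Set (Linf n × Linf n)) (r : ℝ) :
    Set (Linf n × Linf n) :=
  ⋃ i : ℕ, ⋃ (_ : 1 ≤ i ∧ (i : ℝ) * ε ≤ r), off A (ENNReal.ofReal ((i : ℝ) * ε))

/-- The filtration of correspondences `{p(F_{iε}) ← F_{iε} → q(F_{iε})}` of the gridded
sampled map. -/
def gridFilt {n : ℕ} (ε : ℝ) {S : Set (Linf n)} (h : S → Linf n) :
    FiltCorr (Linf n) (Linf n) where
  Xf r := Prod.fst '' stepSet ε (gridCorr ε h) r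
  Gf r := stepSet ε (gridCorr ε h) r
  Yf r := Prod.snd '' stepSet ε (gridCorr ε h) r
  monoX hrs := Set.image_mono (by
    intro x hx
    simp only [stepSet, Set.mem_iUnion] at hx ⊢
    obtain ⟨i, ⟨h1, h2⟩, hx⟩ := hx
    exact ⟨i, ⟨h1, h2.trans hrs⟩, hx⟩)
  monoG hrs := by
    intro x hx
    simp only [stepSet, Set.mem_iUnion] at hx ⊢
    obtain ⟨i, ⟨h1, h2⟩, hx⟩ := hx
    exact ⟨i, ⟨h1, h2.trans hrs⟩, hx⟩
  monoY hrs := Set.image_mono (by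
    intro x hx
    simp only [stepSet, Set.mem_iUnion] at hx ⊢
    obtain ⟨i, ⟨h1, h2⟩, hx⟩ := hx
    exact ⟨i, ⟨h1, h2.trans hrs⟩, hx⟩)
  projX r z hz := Set.mem_image_of_mem _ hz
  projY r z hz := Set.mem_image_of_mem _ hz

/-- The `ℝ`-persistence module of the gridded sampled map: at each radius, the multiplicity
space of the interval `I[1,3]` in the interval decomposition of the `A₃(bf)` representation
`H(p(F_{iε})) ← H(F_{iε}) → H(q(F_{iε}))`, with induced transition maps. -/
def gridPers (K : Type) [Field K] (k : ℕ) {n : ℕ} (ε : ℝ) {S : Set (Linf n)}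
    (h : S → Linf n) : PersData K :=
  (gridFilt ε h).pers K k

namespace ModuleCat

variable {R : Type*} [Ring R] {A B C D : ModuleCat R}

lemma ker_le_comap_ker_of_comm {i : A ⟶ B} {p : A ⟶ C} {p' : B ⟶ D} {j : C ⟶ D}
    (w : i ≫ p' = p ≫ j) : LinearMap.ker p.hom ≤ (LinearMap.ker p'.hom).comap i.hom := by
  rw [← LinearMap.ker_comp, ← hom_comp, w, hom_comp]
  exact LinearMap.ker_le_ker_comp _ _

end ModuleCat

namespace FiltCorr

variable {α β : Type} [TopologicalSpace α] [TopologicalSpace β] (K : Type) [Field K] (k : ℕ)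

def SubAt (F : FiltCorr α β) (r : ℝ) (F' : FiltCorr α β) (s : ℝ) : Prop :=
  F.Xf r ⊆ F'.Xf s ∧ F.Gf r ⊆ F'.Gf s ∧ F.Yf r ⊆ F'.Yf s

lemma SubAt.trans {F F' F'' : FiltCorr α β} {r s t : ℝ} (h₁ : F.SubAt r F' s)
    (h₂ : F'.SubAt s F'' t) : F.SubAt r F'' t :=
  ⟨h₁.1.trans h₂.1, h₁.2.1.trans h₂.2.1, h₁.2.2.trans h₂.2.2⟩

lemma subAt_of_le (F : FiltCorr α β) {r s : ℝ} (h : r ≤ s) : F.SubAt r F s :=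
  ⟨F.monoX h, F.monoG h, F.monoY h⟩

lemma inclusion_comp_pMor {F F' : FiltCorr α β} {r s : ℝ} (h : F.SubAt r F' s) :
    TopCat.ofHom (ContinuousMap.inclusion h.2.1) ≫ F'.pMor s =
      F.pMor r ≫ TopCat.ofHom (ContinuousMap.inclusion h.1) := by
  ext; rfl

lemma inclusion_comp_qMor {F F' : FiltCorr α β} {r s : ℝ} (h : F.SubAt r F' s) :
    TopCat.ofHom (ContinuousMap.inclusion h.2.1) ≫ F'.qMor s =
      F.qMor r ≫ TopCat.ofHom (ContinuousMap.inclusion h.2.2) := by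
  ext; rfl

lemma ker13_le_comap {F F' : FiltCorr α β} {r s : ℝ} (h : F.SubAt r F' s) :
    F.ker13 K k r ≤ (F'.ker13 K k s).comap
      ((SingH K k).map (TopCat.ofHom (ContinuousMap.inclusion h.2.1))).hom := by
  have hp := ModuleCat.ker_le_comap_ker_of_comm (i := (SingH K k).map _)
    (p := (SingH K k).map (F.pMor r)) (p' := (SingH K k).map (F'.pMor s))
    (j := (SingH K k).map (TopCat.ofHom (ContinuousMap.inclusion h.1)))
    (by rw [← Functor.map_comp, ← Functor.map_comp, inclusion_comp_pMor h])
  have hq := ModuleCat.ker_le_comap_ker_of_comm (i := (SingH K k).map _)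
    (p := (SingH K k).map (F.qMor r)) (p' := (SingH K k).map (F'.qMor s))
    (j := (SingH K k).map (TopCat.ofHom (ContinuousMap.inclusion h.2.2)))
    (by rw [← Functor.map_comp, ← Functor.map_comp, inclusion_comp_qMor h])
  exact sup_le (hp.trans (Submodule.comap_mono le_sup_left))
    (hq.trans (Submodule.comap_mono le_sup_right))

def persMap {F F' : FiltCorr α β} {r s : ℝ} (h : F.SubAt r F' s) :
    (F.pers K k).Mod r ⟶ (F'.pers K k).Mod s :=
  ModuleCat.ofHom (Submodule.mapQ _ _ _ (ker13_le_comap K k h))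

lemma persMap_of_le (F : FiltCorr α β) {r s : ℝ} (h : r ≤ s) :
    persMap K k (F.subAt_of_le h) = (F.pers K k).tr h :=
  rfl

lemma persMap_comp {F F' F'' : FiltCorr α β} {r s t : ℝ} (h₁ : F.SubAt r F' s)
    (h₂ : F'.SubAt s F'' t) :
    persMap K k h₁ ≫ persMap K k h₂ = persMap K k (h₁.trans h₂) := by
  ext x
  obtain ⟨v, rfl⟩ := Submodule.Quotient.mk_surjective _ x
  exact congrArg Submodule.Quotient.mk
    (congrArg (fun f => ModuleCat.Hom.hom f v) ((SingH K k).map_comp _ _).symm)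

lemma interleaved_pers {F F' : FiltCorr α β} {δ : ℝ} (hδ : 0 ≤ δ)
    (h : ∀ r, F.SubAt r F' (r + δ)) (h' : ∀ r, F'.SubAt r F (r + δ)) :
    Interleaved K (F.pers K k) (F'.pers K k) δ := by
  refine ⟨hδ, fun r => persMap K k (h r), fun r => persMap K k (h' r), ?_, ?_, ?_, ?_⟩ <;>
    intros <;> simp only [← persMap_of_le, persMap_comp]

end FiltCorr

lemma dI_le_of_interleaved {K : Type} [Field K] {M N : PersData K} {δ : ℝ}
    (h : Interleaved K M N δ) : dI K M N ≤ ENNReal.ofReal δ :=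
  sInf_le ⟨δ, rfl, h⟩

section Grid

open Metric Set

lemma off_mono {γ : Type} [PseudoEMetricSpace γ] (A : Set γ) {r s : ℝ≥0∞} (hrs : r ≤ s) :
    off A r ⊆ off A s := fun _ hx => le_trans hx hrs

lemma off_subset_off_add_hausdorffEDist {γ : Type} [PseudoEMetricSpace γ] (A B : Set γ)
    (r : ℝ≥0∞) : off A r ⊆ off B (r + hausdorffEDist A B) := fun _ hx =>
  infEDist_le_infEDist_add_hausdorffEDist.trans (add_le_add_left hx _)

lemma stepSet_subset_stepSet_add {n : ℕ} {ε : ℝ} (hε : 0 ≤ ε) {A B : Set (Linf n × Linf n)}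
    (hAB : hausdorffEDist A B ≤ ENNReal.ofReal ε) (r : ℝ) :
    stepSet ε A r ⊆ stepSet ε B (r + ε) := by
  simp only [stepSet, iUnion_subset_iff]
  intro i ⟨hi, hir⟩
  have hoff : off A (ENNReal.ofReal (i * ε)) ⊆ off B (ENNReal.ofReal ((i + 1 : ℕ) * ε)) := by
    refine (off_subset_off_add_hausdorffEDist A B _).trans (off_mono B ?_)
    rw [Nat.cast_succ, add_one_mul, ENNReal.ofReal_add (by positivity) hε]
    gcongr
  refine hoff.trans (subset_iUnion₂_of_subset (i + 1) ⟨by omega, ?_⟩ le_rfl)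
  push_cast
  linarith

lemma gridFilt_subAt {n : ℕ} {ε : ℝ} (hε : 0 ≤ ε) {S S' : Set (Linf n)} {h : S → Linf n}
    {h' : S' → Linf n} (hd : hausdorffEDist (gridCorr ε h) (gridCorr ε h') ≤ ENNReal.ofReal ε)
    (r : ℝ) : (gridFilt ε h).SubAt r (gridFilt ε h') (r + ε) :=
  have hG := stepSet_subset_stepSet_add hε hd r
  ⟨image_mono hG, hG, image_mono hG⟩

lemma exists_edist_le_of_hausdorffEDist_le {γ : Type} [PseudoEMetricSpace γ] {A B : Set γ}
    {x : γ} {r : ℝ≥0∞} (hB : B.Finite) (hx : x ∈ A) (hAB : hausdorffEDist A B ≤ r)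
    (hr : r ≠ ⊤) : ∃ y ∈ B, edist x y ≤ r := by
  have hxB := (infEDist_le_hausdorffEDist_of_mem hx).trans hAB
  have hne : B.Nonempty := nonempty_iff_ne_empty.2 fun hB₀ =>
    hr (top_le_iff.1 (by rwa [hB₀, infEDist_empty] at hxB))
  obtain ⟨y, hy, hxy⟩ := hB.isCompact.exists_infEDist_eq_edist hne x
  exact ⟨y, hy, hxy ▸ hxB⟩

lemma exists_cell_near {ε : ℝ} (hε : 0 ≤ ε) {a : ℤ} {x s s' : ℝ}
    (hx : x ∈ Icc (a * ε) ((a + 1) * ε)) (hs : s ∈ Icc (a * ε) ((a + 1) * ε))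
    (hss' : dist s s' ≤ ε) :
    ∃ a' : ℤ, s' ∈ Icc (a' * ε) ((a' + 1) * ε) ∧
      ∃ w ∈ Icc (a' * ε) ((a' + 1) * ε), dist x w ≤ ε := by
  rw [Real.dist_eq, abs_le] at hss'
  obtain ⟨hx₁, hx₂⟩ := hx
  obtain ⟨hs₁, hs₂⟩ := hs
  by_cases hlo : s' < a * ε
  · refine ⟨a - 1, ⟨?_, ?_⟩, a * ε, ⟨?_, ?_⟩, ?_⟩ <;> push_cast
    all_goals first | linarith | rw [Real.dist_eq, abs_le]; constructor <;> linarith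
  by_cases hhi : (a + 1) * ε < s'
  · refine ⟨a + 1, ⟨?_, ?_⟩, (a + 1) * ε, ⟨?_, ?_⟩, ?_⟩ <;> push_cast
    all_goals first | linarith | rw [Real.dist_eq, abs_le]; constructor <;> linarith
  exact ⟨a, ⟨not_lt.1 hlo, not_lt.1 hhi⟩, x, ⟨hx₁, hx₂⟩, by rwa [dist_self]⟩

lemma exists_cube_near {n : ℕ} {ε : ℝ} (hε : 0 ≤ ε) {a : Fin n → ℤ} {x s s' : Linf n}
    (hx : x ∈ cube ε a) (hs : s ∈ cube ε a) (hss' : dist s s' ≤ ε) :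
    ∃ a', s' ∈ cube ε a' ∧ ∃ w ∈ cube ε a', dist x w ≤ ε := by
  choose a' hs' w hw hxw using fun i =>
    exists_cell_near hε (hx i) (hs i) ((dist_le_pi_dist s s' i).trans hss')
  exact ⟨a', hs', w, hw, (dist_pi_le_iff hε).2 hxw⟩

lemma gridCorr_subset_off {n : ℕ} {ε : ℝ} (hε : 0 ≤ ε) {S S' : Set (Linf n)}
    (hS' : S'.Finite) (h : S → Linf n) (h' : S' → Linf n)
    (hd : hausdorffEDist (gr h) (gr h') ≤ ENNReal.ofReal ε) :
    gridCorr ε h ⊆ off (gridCorr ε h') (ENNReal.ofReal ε) := by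
  rintro z ⟨aX, aY, hzX, hzY, s, hsX, hsY⟩
  have : Finite S' := hS'.to_subtype
  obtain ⟨_, ⟨s', rfl⟩, hss'⟩ := exists_edist_le_of_hausdorffEDist_le (finite_range _)
    (mem_range_self s) hd ENNReal.ofReal_ne_top
  rw [edist_le_ofReal hε, Prod.dist_eq, max_le_iff] at hss'
  obtain ⟨aX', hs'X, w₁, hw₁, hzw₁⟩ := exists_cube_near hε hzX hsX hss'.1
  obtain ⟨aY', hs'Y, w₂, hw₂, hzw₂⟩ := exists_cube_near hε hzY hsY hss'.2
  have hw : (w₁, w₂) ∈ gridCorr ε h' := ⟨aX', aY', hw₁, hw₂, s', hs'X, hs'Y⟩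
  refine (infEDist_le_edist_of_mem hw).trans ?_
  rw [edist_le_ofReal hε, Prod.dist_eq]
  exact max_le hzw₁ hzw₂

end Grid

/-- Grid stability: with grids of mesh `ε`, if
`d_H(Gr(h), Gr(h')) ≤ ε` in the `L∞` metric, then the gridded correspondences satisfy
`F^h_ε ⊆ (F^{h'}_ε)_ε` and `F^{h'}_ε ⊆ (F^h_ε)_ε`, i.e. `d_H(F^h_ε, F^{h'}_ε) ≤ ε`, and
the resulting `ℝ`-persistence modules satisfy `d_I(M^h, M^{h'}) ≤ ε`. -/
theorem grid_stability (K : Type) [Field K] (k : ℕ) {n : ℕ} (ε : ℝ) (hε : 0 < ε)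
    {S S' : Set (Linf n)} (hS : S.Finite) (hS' : S'.Finite)
    (h : S → Linf n) (h' : S' → Linf n)
    (hd : hausdorffEdist (gr h) (gr h') ≤ ENNReal.ofReal ε) :
    gridCorr ε h ⊆ off (gridCorr ε h') (ENNReal.ofReal ε) ∧
    gridCorr ε h' ⊆ off (gridCorr ε h) (ENNReal.ofReal ε) ∧
    hausdorffEdist (gridCorr ε h) (gridCorr ε h') ≤ ENNReal.ofReal ε ∧
    dI K (gridPers K k ε h) (gridPers K k ε h') ≤ ENNReal.ofReal ε := by
  have hF := gridCorr_subset_off hε.le hS' h h' hd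
  have hF' := gridCorr_subset_off hε.le hS h' h (Metric.hausdorffEDist_comm.trans_le hd)
  have hH : Metric.hausdorffEDist (gridCorr ε h) (gridCorr ε h') ≤ ENNReal.ofReal ε :=
    Metric.hausdorffEDist_le_of_infEDist (fun _ hz => hF hz) (fun _ hz => hF' hz)
  refine ⟨hF, hF', hH, dI_le_of_interleaved (FiltCorr.interleaved_pers K k hε.le ?_ ?_)⟩
  · exact gridFilt_subAt hε.le hH
  · exact gridFilt_subAt hε.le (Metric.hausdorffEDist_comm.trans_le hH)

end
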